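/- Let x and y be $-terminal strings and let k be an integer with 0 ≤ k < L. Let E_k be the event, over a random underlying function ρ, that i(x,k,ρ) < |x|, i(y,k,ρ) < |y|, and x_{i(x,k,ρ)} ≠ y_{i(y,k,ρ)}. If Pr[E_k] > 0, then: Pr[g_k(x,y,ρ) = loop | E_k] = p_a²; Pr[g_k(x,y,ρ) = delete | E_k] = p_a(1−p_a)p_r; Pr[g_k(x,y,ρ) = insert | E_k] = p_a(1−p_a)p_r; and Pr[g_k(x,y,ρ) = replace | E_k] = (1−p_a)²p_r². -/

import Mathlib

/-!
Let `i` and `j` be the scanning indices of `x` and `y` just before step `k`. They are determined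
by the values of `ρ` at hash positions `< k`, while step `k` of the two hash computations reads
only `ρ(x_i, k)` and `ρ(y_j, k)`, two distinct coordinates when `x_i ≠ y_j`. So, conditionally on
each value of `(i, j)` with `x_i ≠ y_j`, the two operations at step `k` are independent, each a
hash-insert with probability `p_a` and a hash-replace with probability `(1 - p_a) p_r`, and the
four conditional probabilities follow by summing over these values of `(i, j)`.
-/

open MeasureTheory

namespace EditLSH

/-- Hash operations: hash-insert, hash-replace, hash-match. -/
inductive HashOp | ins | rep | mat
  deriving DecidableEq

/-- Grid walk characters. -/
inductive GOp | gins | gdel | grep | gloop | gmat | gstop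
  deriving DecidableEq

/-- Transformation operations. -/
inductive TOp | tins | tdel | trep
  deriving DecidableEq

/-- `p_a = √(p/(1+p))`. -/
noncomputable def pa (p : ℝ) : ℝ := Real.sqrt (p / (1 + p))

/-- `p_r = √p/(√(1+p) − √p)`. -/
noncomputable def prr (p : ℝ) : ℝ := Real.sqrt p / (Real.sqrt (1 + p) - Real.sqrt p)

/-- `L = 8d/(1−p_a) + 6 ln n`. -/
noncomputable def Lreal (p : ℝ) (d n : ℕ) : ℝ := 8 * d / (1 - pa p) + 6 * Real.log n

/-- The number of valid hash positions: `k` is a valid position iff `(k : ℝ) < Lreal p d n`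
iff `k < LN p d n`. -/
noncomputable def LN (p : ℝ) (d n : ℕ) : ℕ := ⌈Lreal p d n⌉₊

/-- An underlying function: a map from (character, hash position) pairs to pairs of reals.
Characters are `Option α`, where `none` plays the role of the special character `$`. -/
abbrev Ufun (α : Type) (p : ℝ) (d n : ℕ) : Type := (Option α × Fin (LN p d n)) → ℝ × ℝ

/-- Extend an underlying function to all of `ℕ` (positions `≥ L` are never queried). -/
noncomputable def ext {α : Type} (p : ℝ) (d n : ℕ) (ρ : Ufun α p d n) :
    Option α × ℕ → ℝ × ℝ :=
  fun ck => if h : ck.2 < LN p d n then ρ (ck.1, ⟨ck.2, h⟩) else (1, 1)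

/-- A string is `$`-terminal if its last character is `$` (i.e. `none`) and `$` occurs
nowhere else. -/
def DollarTerminal {α : Type} (x : List (Option α)) : Prop :=
  ∃ w : List α, x = w.map some ++ [none]

/-- The transcript of the hash computation: the list of operations performed by the
while loop, given the remaining input, the fuel `LN - k`, and the current output length `k`. -/
noncomputable def transcriptAux {α : Type} (pav prv : ℝ) (ρ : Option α × ℕ → ℝ × ℝ) :
    ℕ → List (Option α) → ℕ → List HashOp
  | 0, _, _ => []
  | _ + 1, [], _ => []
  | fuel + 1, c :: rest, k =>
    if (ρ (c, k)).1 ≤ pav then HashOp.ins :: transcriptAux pav prv ρ fuel (c :: rest) (k + 1)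
    else if (ρ (c, k)).2 ≤ prv then HashOp.rep :: transcriptAux pav prv ρ fuel rest (k + 1)
    else HashOp.mat :: transcriptAux pav prv ρ fuel rest (k + 1)

/-- The hash string produced by the while loop.  Output characters live in
`Option (Option α)`, with `none` playing the role of `⊥`. -/
noncomputable def hashAux {α : Type} (pav prv : ℝ) (ρ : Option α × ℕ → ℝ × ℝ) :
    ℕ → List (Option α) → ℕ → List (Option (Option α))
  | 0, _, _ => []
  | _ + 1, [], _ => []
  | fuel + 1, c :: rest, k =>
    if (ρ (c, k)).1 ≤ pav then none :: hashAux pav prv ρ fuel (c :: rest) (k + 1)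
    else if (ρ (c, k)).2 ≤ prv then none :: hashAux pav prv ρ fuel rest (k + 1)
    else some c :: hashAux pav prv ρ fuel rest (k + 1)

/-- The transcript `τ(x,ρ)`. -/
noncomputable def transcript {α : Type} (p : ℝ) (d n : ℕ) (ρ : Ufun α p d n)
    (x : List (Option α)) : List HashOp :=
  transcriptAux (pa p) (prr p) (ext p d n ρ) (LN p d n) x 0

/-- The hash `h_ρ(x)` of an (already `$`-terminal) string `x`. -/
noncomputable def hash {α : Type} (p : ℝ) (d n : ℕ) (ρ : Ufun α p d n)
    (x : List (Option α)) : List (Option (Option α)) :=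
  hashAux (pa p) (prr p) (ext p d n ρ) (LN p d n) x 0

/-- `τ(x,ρ)` is complete if `|τ(x,ρ)| < L`. -/
noncomputable def CompleteT (p : ℝ) (d n : ℕ) (τ : List HashOp) : Prop :=
  (τ.length : ℝ) < Lreal p d n

/-- The index function `i(x,k,ρ)`: the scanning index just before the `(k+1)`-st operation,
i.e. the number of non-hash-insert operations among the first `k` operations. -/
noncomputable def idx {α : Type} (p : ℝ) (d n : ℕ) (ρ : Ufun α p d n)
    (x : List (Option α)) (k : ℕ) : ℕ :=
  ((transcript p d n ρ x).take k).countP (fun op => decide (op ≠ HashOp.ins))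

/-- The `k`-th character `g_k(x,y,ρ)` of the grid walk. -/
noncomputable def gridChar {α : Type} [DecidableEq α] (p : ℝ) (d n : ℕ) (ρ : Ufun α p d n)
    (x y : List (Option α)) (k : ℕ) : GOp :=
  if k < min (transcript p d n ρ x).length (transcript p d n ρ y).length then
    if x[idx p d n ρ x k]? ≠ y[idx p d n ρ y k]? then
      match (transcript p d n ρ x).getD k HashOp.ins, (transcript p d n ρ y).getD k HashOp.ins with
      | HashOp.rep, HashOp.rep => GOp.grep
      | HashOp.rep, HashOp.ins => GOp.gdel
      | HashOp.ins, HashOp.rep => GOp.gins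
      | HashOp.ins, HashOp.ins => GOp.gloop
      | _, _ => GOp.gstop
    else
      match (transcript p d n ρ x).getD k HashOp.ins with
      | HashOp.ins => GOp.gloop
      | _ => GOp.gmat
  else GOp.gstop

/-- The grid walk `g(x,y,ρ)`: a sequence of length `max(|τ(x,ρ)|,|τ(y,ρ)|)`. -/
noncomputable def gridWalk {α : Type} [DecidableEq α] (p : ℝ) (d n : ℕ) (ρ : Ufun α p d n)
    (x y : List (Option α)) : List GOp :=
  (List.range (max (transcript p d n ρ x).length (transcript p d n ρ y).length)).map
    (gridChar p d n ρ x y)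

/-- The grid walk is alive: both transcripts are complete and no `stop` occurs. -/
noncomputable def Alive {α : Type} [DecidableEq α] (p : ℝ) (d n : ℕ) (ρ : Ufun α p d n)
    (x y : List (Option α)) : Prop :=
  CompleteT p d n (transcript p d n ρ x) ∧ CompleteT p d n (transcript p d n ρ y) ∧
    GOp.gstop ∉ gridWalk p d n ρ x y

/-- The uniform probability measure on `[0,1) × [0,1)`. -/
noncomputable def unif01 : Measure (ℝ × ℝ) :=
  (volume.restrict (Set.Ico (0 : ℝ) 1)).prod (volume.restrict (Set.Ico (0 : ℝ) 1))

instance : SigmaFinite unif01 := by unfold unif01; infer_instance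

/-- The probability measure on underlying functions: all values independent, each
coordinate uniform on `[0,1)`. -/
noncomputable def μU (α : Type) [Fintype α] (p : ℝ) (d n : ℕ) : Measure (Ufun α p d n) :=
  Measure.pi fun _ : Option α × Fin (LN p d n) => unif01

/-- Costs for the Levenshtein distance (as formerly in Mathlib's `Mathlib.Data.List.EditDistance.Defs`). -/
structure Levenshtein.Cost (α β δ : Type) where
  delete : α → δ
  insert : β → δ
  substitute : α → β → δ

/-- The default cost: all operations cost one, substituting equal characters costs zero. -/
def Levenshtein.defaultCost {α : Type} [DecidableEq α] : Levenshtein.Cost α α ℕ where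
  delete _ := 1
  insert _ := 1
  substitute a b := if a = b then 0 else 1

/-- One step of the Levenshtein dynamic program. -/
def Levenshtein.impl {α β δ : Type} [AddZeroClass δ] [Min δ] (C : Levenshtein.Cost α β δ)
    (xs : List α) (y : β) (d : {r : List δ // 0 < r.length}) : {r : List δ // 0 < r.length} :=
  let ⟨ds, w⟩ := d
  xs.zip (ds.zip ds.tail) |>.foldr
    (init := ⟨[C.insert y + ds.getLast (List.ne_nil_of_length_pos w)], by simp⟩)
    (fun ⟨x, d₀, d₁⟩ ⟨r, w⟩ =>
      ⟨min (C.delete x + r[0]) (min (C.insert y + d₀) (C.substitute x y + d₁)) :: r, by simp⟩)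

/-- Levenshtein distances of all suffixes of `xs` to `ys`. -/
def suffixLevenshtein {α β δ : Type} [AddZeroClass δ] [Min δ] (C : Levenshtein.Cost α β δ)
    (xs : List α) (ys : List β) : {r : List δ // 0 < r.length} :=
  ys.foldr
    (Levenshtein.impl C xs)
    (xs.foldr (init := ⟨[0], by simp⟩) (fun a ⟨ds, w⟩ => ⟨(C.delete a + ds[0]) :: ds, by simp⟩))

/-- The Levenshtein distance (as formerly in Mathlib). -/
def levenshtein {α β δ : Type} [AddZeroClass δ] [Min δ] (C : Levenshtein.Cost α β δ)
    (xs : List α) (ys : List β) : δ :=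
  let ⟨r, w⟩ := suffixLevenshtein C xs ys
  r[0]

/-- Edit distance: the minimum number of single-character insertions, deletions and
replacements needed to transform `x` into `y`. -/
def ED {β : Type} [DecidableEq β] (x y : List β) : ℕ :=
  levenshtein Levenshtein.defaultCost x y

/-- The smallest index at which `s` and `y` differ (`0` if `s = y`). -/
def firstDiff {β : Type} [DecidableEq β] (s y : List β) : ℕ :=
  (((List.range (max s.length y.length + 1)).find? fun i => decide (s[i]? ≠ y[i]?)).getD 0)

/-- Apply a single transformation operation to `s`, greedily relative to `y`. -/
def applyOp {β : Type} [DecidableEq β] [Inhabited β] (y s : List β) : TOp → List β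
  | TOp.tins => s.insertIdx (firstDiff s y) (y.getD (firstDiff s y) default)
  | TOp.tdel => s.eraseIdx (firstDiff s y)
  | TOp.trep => s.set (firstDiff s y) (y.getD (firstDiff s y) default)

/-- `T(x,y)`: greedily apply the transformation `T` to `x`, relative to `y`. -/
def applyT {β : Type} [DecidableEq β] [Inhabited β] (x y : List β) (T : List TOp) : List β :=
  T.foldl (fun s op => applyOp y s op) x

/-- `T` is valid for `x` and `y`. -/
def ValidT {β : Type} (T : List TOp) (x y : List β) : Prop :=
  T.countP (fun o => decide (o = TOp.tdel ∨ o = TOp.trep)) ≤ x.length ∧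
    T.countP (fun o => decide (o = TOp.tins ∨ o = TOp.trep)) ≤ y.length

/-- `T` solves `x` and `y`. -/
def Solves {β : Type} [DecidableEq β] [Inhabited β] (T : List TOp) (x y : List β) : Prop :=
  ValidT T x y ∧ applyT x y T = y ∧ ∀ i < T.length, applyT x y (T.take i) ≠ y

/-- Convert a grid walk character to a transformation operation (dropping loop/match/stop). -/
def toTOp : GOp → Option TOp
  | GOp.gins => some TOp.tins
  | GOp.gdel => some TOp.tdel
  | GOp.grep => some TOp.trep
  | _ => none

open Classical in
/-- The transformation `𝒯(x,y,ρ)` induced by `x`, `y` and `ρ`. -/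
noncomputable def inducedT {α : Type} [DecidableEq α] (p : ℝ) (d n : ℕ) (ρ : Ufun α p d n)
    (x y : List (Option α)) : List TOp :=
  if Alive p d n ρ x y then (gridWalk p d n ρ x y).filterMap toTOp else []

/-- Nodes of the graph `G(x,y)`: grid nodes `(i,j)` plus the stop node (`none`). -/
abbrev Node : Type := Option (ℕ × ℕ)

/-- The arcs of `G(x,y)`: `stepG x y v op = some v'` iff there is an arc labelled `op`
from `v` to `v'`; `none` means no outgoing arc with that label. -/
def stepG {α : Type} [DecidableEq α] (x y : List (Option α)) : Node → GOp → Option Node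
  | none, _ => some none
  | some (i, j), op =>
    if i < x.length ∧ j < y.length then
      if i < x.length - 1 ∧ j < y.length - 1 then
        if x[i]? ≠ y[j]? then
          match op with
          | GOp.gdel => some (some (i + 1, j))
          | GOp.grep => some (some (i + 1, j + 1))
          | GOp.gins => some (some (i, j + 1))
          | GOp.gloop => some (some (i, j))
          | GOp.gstop => some none
          | GOp.gmat => none
        else
          match op with
          | GOp.gmat => some (some (i + 1, j + 1))
          | GOp.gloop => some (some (i, j))
          | _ => none
      else if i = x.length - 1 ∧ j < y.length - 1 then
        match op with
        | GOp.gins => some (some (i, j + 1))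
        | GOp.gloop => some (some (i, j))
        | GOp.gdel | GOp.grep | GOp.gstop => some none
        | GOp.gmat => none
      else if i < x.length - 1 ∧ j = y.length - 1 then
        match op with
        | GOp.gdel => some (some (i + 1, j))
        | GOp.gloop => some (some (i, j))
        | GOp.gins | GOp.grep | GOp.gstop => some none
        | GOp.gmat => none
      else
        match op with
        | GOp.gloop => some (some (i, j))
        | _ => none
    else none

/-- Follow a list of grid-walk characters through `G(x,y)` starting at node `v`;
returns `none` if at some step the required arc does not exist. -/
def walkFrom {α : Type} [DecidableEq α] (x y : List (Option α)) : Node → List GOp → Option Node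
  | v, [] => some v
  | v, op :: rest =>
    match stepG x y v op with
    | none => none
    | some v' => walkFrom x y v' rest

lemma pa_nonneg (p : ℝ) : 0 ≤ pa p := Real.sqrt_nonneg _

lemma pa_le_one {p : ℝ} (hp : 0 ≤ p) : pa p ≤ 1 :=
  Real.sqrt_le_one.mpr ((div_le_one (add_pos_of_pos_of_nonneg one_pos hp)).mpr (by linarith))

lemma prr_nonneg (p : ℝ) : 0 ≤ prr p :=
  div_nonneg (Real.sqrt_nonneg p)
    (sub_nonneg.mpr (Real.sqrt_le_sqrt (le_add_of_nonneg_left zero_le_one)))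

lemma prr_le_one {p : ℝ} (hp0 : 0 ≤ p) (hp : p ≤ 1 / 3) : prr p ≤ 1 := by
  have hlt : Real.sqrt p < Real.sqrt (1 + p) := Real.sqrt_lt_sqrt hp0 (by linarith)
  rw [prr, div_le_one (by linarith)]
  have h4 : Real.sqrt (4 * p) ≤ Real.sqrt (1 + p) := Real.sqrt_le_sqrt (by linarith)
  rw [show (4 : ℝ) * p = 2 ^ 2 * p by ring, Real.sqrt_mul (by positivity),
    Real.sqrt_sq (by norm_num)] at h4
  linarith

section ProductMeasure

variable {ι : Type*} [Fintype ι] {X : ι → Type*} [∀ i, MeasurableSpace (X i)]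
  (μ : ∀ i, Measure (X i)) [∀ i, IsProbabilityMeasure (μ i)]

theorem measure_pi_inter_of_dependsOn {s : Set ι} {A B : Set (∀ i, X i)}
    (hA : MeasurableSet A) (hB : MeasurableSet B)
    (hAs : DependsOn (· ∈ A) s) (hBs : DependsOn (· ∈ B) sᶜ) :
    Measure.pi μ (A ∩ B) = Measure.pi μ A * Measure.pi μ B := by
  classical
  rcases isEmpty_or_nonempty (∀ i, X i) with hX | ⟨⟨ρ₀⟩⟩
  · simp [Set.eq_empty_of_isEmpty A]
  let e := MeasurableEquiv.piEquivPiSubtypeProd X (· ∈ s)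
  have he := measurePreserving_piEquivPiSubtypeProd μ (· ∈ s)
  -- `ρ₀` fills in the coordinates that `A`, resp. `B`, does not depend on.
  set A' := {g | e.symm (g, (e ρ₀).2) ∈ A}
  set B' := {h | e.symm ((e ρ₀).1, h) ∈ B}
  have hA' : MeasurableSet A' :=
    (e.symm.measurable.comp (measurable_id.prodMk measurable_const)) hA
  have hB' : MeasurableSet B' :=
    (e.symm.measurable.comp (measurable_const.prodMk measurable_id)) hB
  have hAe : A = e ⁻¹' (A' ×ˢ Set.univ) := by
    ext ρ
    refine (eq_iff_iff.mp (@hAs ρ (e.symm ((e ρ).1, (e ρ₀).2)) fun i hi => ?_)).trans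
      (by simp [A'])
    simp [e, MeasurableEquiv.piEquivPiSubtypeProd, Equiv.piEquivPiSubtypeProd, hi]
  have hBe : B = e ⁻¹' (Set.univ ×ˢ B') := by
    ext ρ
    refine (eq_iff_iff.mp (@hBs ρ (e.symm ((e ρ₀).1, (e ρ).2)) fun i hi => ?_)).trans
      (by simp [B'])
    simp [e, MeasurableEquiv.piEquivPiSubtypeProd, Equiv.piEquivPiSubtypeProd,
      Set.notMem_of_mem_compl hi]
  have hABe : A ∩ B = e ⁻¹' (A' ×ˢ B') := by
    rw [hAe, hBe, ← Set.preimage_inter, Set.prod_inter_prod, Set.inter_univ, Set.univ_inter]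
  rw [hABe, hAe, hBe, he.measure_preimage (hA'.prod hB').nullMeasurableSet,
    he.measure_preimage (hA'.prod .univ).nullMeasurableSet,
    he.measure_preimage (MeasurableSet.univ.prod hB').nullMeasurableSet]
  simp [Measure.prod_prod]

theorem measure_pi_inter_eval_preimage {A : Set (∀ i, X i)} (hA : MeasurableSet A) {i : ι}
    (hAi : DependsOn (· ∈ A) {i}ᶜ) {t : Set (X i)} (ht : MeasurableSet t) :
    Measure.pi μ (A ∩ Function.eval i ⁻¹' t) = Measure.pi μ A * μ i t := by
  rw [measure_pi_inter_of_dependsOn μ hA (measurable_pi_apply i ht) hAi,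
    (measurePreserving_eval μ i).measure_preimage ht.nullMeasurableSet]
  intro ρ ρ' h
  simp [h i (by simp)]

end ProductMeasure

theorem cond_preimage_eq_of_forall_fiber {Ω β : Type*} [MeasurableSpace Ω] [MeasurableSpace β]
    [Countable β] [MeasurableSingletonClass β] {μ : Measure Ω} [IsFiniteMeasure μ]
    {π : Ω → β} (hπ : Measurable π) {F : Set β} (hF : μ (π ⁻¹' F) ≠ 0) {G : Set Ω}
    {c : ENNReal} (h : ∀ b ∈ F, μ (π ⁻¹' {b} ∩ G) = μ (π ⁻¹' {b}) * c) :
    ProbabilityTheory.cond μ (π ⁻¹' F) G = c := by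
  have hfib : ∀ b ∈ F, MeasurableSet (π ⁻¹' {b}) := fun b _ => hπ (measurableSet_singleton b)
  have hinter : μ (π ⁻¹' F ∩ G) = μ (π ⁻¹' F) * c := by
    rw [← Measure.restrict_apply (hπ F.to_countable.measurableSet),
      ← tsum_measure_preimage_singleton F.to_countable hfib,
      ← tsum_measure_preimage_singleton F.to_countable hfib, ← ENNReal.tsum_mul_right]
    congr 1 with b
    rw [Measure.restrict_apply (hfib b b.2), h b b.2]
  rw [ProbabilityTheory.cond_apply (hπ F.to_countable.measurableSet), hinter,
    ENNReal.inv_mul_cancel_left hF (measure_ne_top _ _)]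

instance : IsProbabilityMeasure (volume.restrict (Set.Ico (0 : ℝ) 1)) :=
  ⟨by simp⟩

instance : IsProbabilityMeasure unif01 := by unfold unif01; infer_instance

lemma volume_restrict_Ico_Iic {t : ℝ} (h1 : t ≤ 1) :
    volume.restrict (Set.Ico (0 : ℝ) 1) (Set.Iic t) = ENNReal.ofReal t := by
  rw [Measure.restrict_apply measurableSet_Iic,
    measure_congr ((Iio_ae_eq_Iic (μ := volume)).symm.inter (ae_eq_refl (Set.Ico (0 : ℝ) 1))),
    Set.inter_comm, Set.Ico_inter_Iio, min_eq_right h1, Real.volume_Ico, sub_zero]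

lemma volume_restrict_Ico_Ioi {t : ℝ} (h0 : 0 ≤ t) (h1 : t ≤ 1) :
    volume.restrict (Set.Ico (0 : ℝ) 1) (Set.Ioi t) = ENNReal.ofReal (1 - t) := by
  rw [← Set.compl_Iic, measure_compl measurableSet_Iic (measure_ne_top _ _),
    volume_restrict_Ico_Iic h1, measure_univ, ← ENNReal.ofReal_one, ENNReal.ofReal_sub _ h0]

noncomputable def hashStep (pav prv : ℝ) (r : ℝ × ℝ) : HashOp :=
  if r.1 ≤ pav then .ins else if r.2 ≤ prv then .rep else .mat

lemma unif01_hashStep_ins {pav : ℝ} (prv : ℝ) (h1 : pav ≤ 1) :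
    unif01 (hashStep pav prv ⁻¹' {.ins}) = ENNReal.ofReal pav := by
  have : hashStep pav prv ⁻¹' {.ins} = Set.Iic pav ×ˢ Set.univ := by
    ext r; simp only [Set.mem_preimage, hashStep]; split_ifs <;> simp_all
  rw [this, unif01, Measure.prod_prod, volume_restrict_Ico_Iic h1, measure_univ, mul_one]

lemma unif01_hashStep_rep {pav prv : ℝ} (h0 : 0 ≤ pav) (h1 : pav ≤ 1) (h1' : prv ≤ 1) :
    unif01 (hashStep pav prv ⁻¹' {.rep}) = ENNReal.ofReal ((1 - pav) * prv) := by
  have : hashStep pav prv ⁻¹' {.rep} = Set.Ioi pav ×ˢ Set.Iic prv := by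
    ext r; simp only [Set.mem_preimage, hashStep]; split_ifs <;> simp_all
  rw [this, unif01, Measure.prod_prod, volume_restrict_Ico_Iic h1',
    volume_restrict_Ico_Ioi h0 h1, ENNReal.ofReal_mul (by linarith)]

def scanCount (τ : List HashOp) : ℕ := τ.countP (fun op => decide (op ≠ HashOp.ins))

lemma scanCount_cons (o : HashOp) (τ : List HashOp) :
    scanCount (o :: τ) = scanCount τ + if o = .ins then 0 else 1 := by
  by_cases h : o = .ins <;> simp [scanCount, h]

section Transcript

variable {α : Type} (pav prv : ℝ) (ρ : Option α × ℕ → ℝ × ℝ)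

lemma transcriptAux_nil (fuel s : ℕ) : transcriptAux pav prv ρ fuel [] s = [] := by
  cases fuel <;> rfl

lemma transcriptAux_succ_cons (fuel : ℕ) (c : Option α) (rest : List (Option α)) (s : ℕ) :
    transcriptAux pav prv ρ (fuel + 1) (c :: rest) s =
      hashStep pav prv (ρ (c, s)) ::
        transcriptAux pav prv ρ fuel
          (if hashStep pav prv (ρ (c, s)) = .ins then c :: rest else rest) (s + 1) := by
  rw [transcriptAux, hashStep]
  split_ifs <;> simp_all

lemma drop_transcriptAux (k fuel : ℕ) (x : List (Option α)) (s : ℕ) :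
    (transcriptAux pav prv ρ fuel x s).drop k =
      transcriptAux pav prv ρ (fuel - k)
        (x.drop (scanCount ((transcriptAux pav prv ρ fuel x s).take k))) (s + k) := by
  induction k generalizing fuel x s with
  | zero => simp [scanCount]
  | succ k ih =>
    rcases fuel with _ | fuel
    · simp [transcriptAux]
    rcases x with _ | ⟨c, rest⟩
    · simp [transcriptAux_nil]
    rw [transcriptAux_succ_cons, List.drop_succ_cons, List.take_succ_cons, scanCount_cons, ih,
      Nat.add_sub_add_right, Nat.add_assoc s 1 k, Nat.add_comm 1 k]
    split_ifs <;> simp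

lemma getElem?_transcriptAux {k fuel : ℕ} {x : List (Option α)} {s : ℕ} (hk : k < fuel)
    (hx : scanCount ((transcriptAux pav prv ρ fuel x s).take k) < x.length) :
    (transcriptAux pav prv ρ fuel x s)[k]? =
      some (hashStep pav prv
        (ρ (x[scanCount ((transcriptAux pav prv ρ fuel x s).take k)], s + k))) := by
  rw [← List.head?_drop, drop_transcriptAux, List.drop_eq_getElem_cons hx,
    show fuel - k = fuel - k - 1 + 1 by omega, transcriptAux_succ_cons]
  rfl

lemma take_transcriptAux_congr {ρ ρ' : Option α × ℕ → ℝ × ℝ} (fuel k : ℕ)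
    (x : List (Option α)) (s : ℕ) (h : ∀ c j, j < s + k → ρ (c, j) = ρ' (c, j)) :
    (transcriptAux pav prv ρ fuel x s).take k = (transcriptAux pav prv ρ' fuel x s).take k := by
  induction fuel generalizing k x s with
  | zero => rfl
  | succ fuel ih =>
    rcases x with _ | ⟨c, rest⟩
    · simp [transcriptAux_nil]
    rcases k with _ | k
    · simp
    rw [transcriptAux_succ_cons, transcriptAux_succ_cons, h c s (by omega), List.take_succ_cons,
      List.take_succ_cons, ih]
    intro c j hj
    exact h c j (by omega)

end Transcript

instance : Fintype HashOp := ⟨{.ins, .rep, .mat}, fun o => by cases o <;> decide⟩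

instance : MeasurableSpace HashOp := ⊤

instance : DiscreteMeasurableSpace HashOp := ⟨fun _ => trivial⟩

instance : MeasurableSpace (List HashOp) := ⊤

instance : DiscreteMeasurableSpace (List HashOp) := ⟨fun _ => trivial⟩

lemma measurable_hashStep (pav prv : ℝ) : Measurable (hashStep pav prv) :=
  Measurable.ite (measurableSet_le measurable_fst measurable_const) measurable_const
    (Measurable.ite (measurableSet_le measurable_snd measurable_const) measurable_const
      measurable_const)

lemma measurable_transcriptAux {α Ω : Type} [MeasurableSpace Ω] (pav prv : ℝ)
    {R : Ω → Option α × ℕ → ℝ × ℝ} (hR : ∀ c, Measurable fun ω => R ω c) (fuel : ℕ)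
    (x : List (Option α)) (s : ℕ) :
    Measurable fun ω => transcriptAux pav prv (R ω) fuel x s := by
  induction fuel generalizing x s with
  | zero => exact measurable_const
  | succ fuel ih =>
    rcases x with _ | ⟨c, rest⟩
    · simp only [transcriptAux_nil]; exact measurable_const
    simp only [transcriptAux_succ_cons]
    let F : Ω × HashOp → List HashOp := fun q =>
      q.2 :: transcriptAux pav prv (R q.1) fuel (if q.2 = .ins then c :: rest else rest) (s + 1)
    have hF : Measurable F :=
      measurable_from_prod_countable_left fun o =>
        (Measurable.of_discrete (f := (o :: ·))).comp
          (ih (if o = .ins then c :: rest else rest) _)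
    exact hF.comp (measurable_id.prodMk ((measurable_hashStep pav prv).comp (hR (c, s))))

section Measurability

variable {α : Type} {p : ℝ} {d n : ℕ}

lemma measurable_ext_apply (c : Option α × ℕ) :
    Measurable fun ρ : Ufun α p d n => ext p d n ρ c := by
  unfold ext
  split_ifs
  · exact measurable_pi_apply _
  · exact measurable_const

lemma measurable_idx (x : List (Option α)) (k : ℕ) :
    Measurable fun ρ : Ufun α p d n => idx p d n ρ x k :=
  (Measurable.of_discrete (f := fun τ => scanCount (τ.take k))).comp
    (measurable_transcriptAux (pa p) (prr p) measurable_ext_apply (LN p d n) x 0)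

noncomputable def idxPair (p : ℝ) (d n : ℕ) (x y : List (Option α)) (k : ℕ)
    (ρ : Ufun α p d n) : ℕ × ℕ :=
  (idx p d n ρ x k, idx p d n ρ y k)

lemma measurable_idxPair (x y : List (Option α)) (k : ℕ) :
    Measurable (idxPair p d n x y k) :=
  (measurable_idx x k).prodMk (measurable_idx y k)

end Measurability

def mismatchStep : HashOp → HashOp → GOp
  | HashOp.rep, HashOp.rep => GOp.grep
  | HashOp.rep, HashOp.ins => GOp.gdel
  | HashOp.ins, HashOp.rep => GOp.gins
  | HashOp.ins, HashOp.ins => GOp.gloop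
  | _, _ => GOp.gstop

lemma mismatchStep_eq_iff {o₁ o₂ : HashOp} (h₁ : o₁ ≠ .mat) (h₂ : o₂ ≠ .mat)
    (o₁' o₂' : HashOp) :
    mismatchStep o₁' o₂' = mismatchStep o₁ o₂ ↔ o₁' = o₁ ∧ o₂' = o₂ := by
  cases o₁ <;> cases o₂ <;> cases o₁' <;> cases o₂' <;> simp_all [mismatchStep]

section GridWalk

variable {α : Type} {p : ℝ} {d n : ℕ}

lemma getElem?_transcript (ρ : Ufun α p d n) (x : List (Option α)) {k : ℕ}
    (hk : k < LN p d n) (hx : idx p d n ρ x k < x.length) :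
    (transcript p d n ρ x)[k]? =
      some (hashStep (pa p) (prr p) (ρ (x[idx p d n ρ x k], ⟨k, hk⟩))) := by
  rw [transcript, getElem?_transcriptAux _ _ _ hk hx]
  simp [ext, hk]
  rfl

lemma dependsOn_idx (x : List (Option α)) (k : ℕ) :
    DependsOn (fun ρ : Ufun α p d n => idx p d n ρ x k) {c | (c.2 : ℕ) < k} := by
  intro ρ ρ' h
  refine congrArg scanCount (take_transcriptAux_congr _ _ _ k x 0 fun c j hj => ?_)
  unfold ext
  split_ifs with hjL
  · exact h (c, ⟨j, hjL⟩) (by simpa using hj)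
  · rfl

lemma gridChar_of_mismatch [DecidableEq α] (ρ : Ufun α p d n) (x y : List (Option α)) {k : ℕ}
    (hk : k < LN p d n) {i j : ℕ} (hix : idx p d n ρ x k = i) (hjy : idx p d n ρ y k = j)
    (hi : i < x.length) (hj : j < y.length) (hne : x[i]? ≠ y[j]?) :
    gridChar p d n ρ x y k =
      mismatchStep (hashStep (pa p) (prr p) (ρ (x[i], ⟨k, hk⟩)))
        (hashStep (pa p) (prr p) (ρ (y[j], ⟨k, hk⟩))) := by
  subst hix hjy
  have hτx := getElem?_transcript ρ x hk hi
  have hτy := getElem?_transcript ρ y hk hj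
  obtain ⟨hkx, -⟩ := List.getElem?_eq_some_iff.mp hτx
  obtain ⟨hky, -⟩ := List.getElem?_eq_some_iff.mp hτy
  rw [gridChar, if_pos (lt_min hkx hky), if_pos hne, List.getD_eq_getElem?_getD,
    List.getD_eq_getElem?_getD, hτx, hτy, Option.getD_some, Option.getD_some]
  generalize hashStep (pa p) (prr p) _ = o₁
  generalize hashStep (pa p) (prr p) _ = o₂
  cases o₁ <;> cases o₂ <;> rfl

end GridWalk

section Conditional

variable {α : Type} [Fintype α] [DecidableEq α] {p : ℝ} {d n : ℕ}

instance : IsProbabilityMeasure (μU α p d n) := by unfold μU; infer_instance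

lemma measure_idxPair_fiber_inter_gridChar (x y : List (Option α)) {k : ℕ}
    (hk : k < LN p d n) {i j : ℕ} (hi : i < x.length) (hj : j < y.length) (hne : x[i]? ≠ y[j]?)
    {o₁ o₂ : HashOp} (h₁ : o₁ ≠ .mat) (h₂ : o₂ ≠ .mat) :
    μU α p d n (idxPair p d n x y k ⁻¹' {(i, j)} ∩
        {ρ | gridChar p d n ρ x y k = mismatchStep o₁ o₂}) =
      μU α p d n (idxPair p d n x y k ⁻¹' {(i, j)}) *
        (unif01 (hashStep (pa p) (prr p) ⁻¹' {o₁}) *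
          unif01 (hashStep (pa p) (prr p) ⁻¹' {o₂})) := by
  set D := idxPair p d n x y k ⁻¹' {(i, j)}
  set a : Option α × Fin (LN p d n) := (x[i], ⟨k, hk⟩)
  set b : Option α × Fin (LN p d n) := (y[j], ⟨k, hk⟩)
  have hab : a ≠ b := by
    simp only [a, b, ne_eq, Prod.mk.injEq, and_true]
    rwa [List.getElem?_eq_getElem hi, List.getElem?_eq_getElem hj, ne_eq,
      Option.some_inj] at hne
  have hmeas : ∀ o, MeasurableSet (hashStep (pa p) (prr p) ⁻¹' {o}) := fun o =>
    measurable_hashStep _ _ (measurableSet_singleton o)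
  have hD : MeasurableSet D := measurable_idxPair x y k (measurableSet_singleton _)
  have hDk : DependsOn (· ∈ D) {c | (c.2 : ℕ) < k} := by
    intro ρ ρ' h
    simp only [D, Set.mem_preimage, idxPair, dependsOn_idx x k h, dependsOn_idx y k h]
  have hset : D ∩ {ρ | gridChar p d n ρ x y k = mismatchStep o₁ o₂} =
      D ∩ Function.eval a ⁻¹' (hashStep (pa p) (prr p) ⁻¹' {o₁}) ∩
        Function.eval b ⁻¹' (hashStep (pa p) (prr p) ⁻¹' {o₂}) := by
    ext ρ
    simp only [Set.mem_inter_iff, and_assoc]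
    refine and_congr_right fun hρ => ?_
    obtain ⟨hix, hjy⟩ := Prod.mk.inj (Set.mem_singleton_iff.mp hρ)
    change gridChar p d n ρ x y k = mismatchStep o₁ o₂ ↔
      hashStep (pa p) (prr p) (ρ a) = o₁ ∧ hashStep (pa p) (prr p) (ρ b) = o₂
    rw [gridChar_of_mismatch ρ x y hk hix hjy hi hj hne, mismatchStep_eq_iff h₁ h₂]
  have hbefore : ∀ c ∈ {c : Option α × Fin (LN p d n) | (c.2 : ℕ) < k}, c ≠ a ∧ c ≠ b :=
    fun c hc => ⟨by rintro rfl; exact absurd hc (lt_irrefl k),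
      by rintro rfl; exact absurd hc (lt_irrefl k)⟩
  have hDa : DependsOn (· ∈ D) {a}ᶜ := hDk.mono fun c hc => (hbefore c hc).1
  have hDab : DependsOn (· ∈ D ∩ Function.eval a ⁻¹' (hashStep (pa p) (prr p) ⁻¹' {o₁}))
      {b}ᶜ := by
    intro ρ ρ' h
    simp only [Set.mem_inter_iff, Set.mem_preimage, Function.eval, h a hab,
      hDk fun c hc => h c (hbefore c hc).2]
  rw [hset, μU, measure_pi_inter_eval_preimage _ (hD.inter (measurable_pi_apply a (hmeas o₁)))
    hDab (hmeas o₂), measure_pi_inter_eval_preimage _ hD hDa (hmeas o₁), mul_assoc]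

theorem cond_gridChar_eq_mismatchStep (x y : List (Option α)) {k : ℕ} (hk : k < LN p d n)
    (hpos : μU α p d n {ρ | idx p d n ρ x k < x.length ∧ idx p d n ρ y k < y.length ∧
      x[idx p d n ρ x k]? ≠ y[idx p d n ρ y k]?} ≠ 0)
    (o₁ o₂ : HashOp) (h₁ : o₁ ≠ .mat) (h₂ : o₂ ≠ .mat) :
    ProbabilityTheory.cond (μU α p d n)
        {ρ | idx p d n ρ x k < x.length ∧ idx p d n ρ y k < y.length ∧
          x[idx p d n ρ x k]? ≠ y[idx p d n ρ y k]?}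
        {ρ | gridChar p d n ρ x y k = mismatchStep o₁ o₂} =
      unif01 (hashStep (pa p) (prr p) ⁻¹' {o₁}) * unif01 (hashStep (pa p) (prr p) ⁻¹' {o₂}) :=
  cond_preimage_eq_of_forall_fiber
    (F := {ij | ij.1 < x.length ∧ ij.2 < y.length ∧ x[ij.1]? ≠ y[ij.2]?})
    (measurable_idxPair x y k) hpos
    fun _ hij => measure_idxPair_fiber_inter_gridChar x y hk hij.1 hij.2.1 hij.2.2 h₁ h₂

end Conditional

theorem stmt4_general {α : Type} [Fintype α] [DecidableEq α]
    (p : ℝ) (hp0 : 0 < p) (hp : p ≤ 1 / 3) (n d : ℕ)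
    (x y : List (Option α))
    (k : ℕ) (hk : (k : ℝ) < Lreal p d n)
    (E : Set (Ufun α p d n))
    (hE : E = {ρ | idx p d n ρ x k < x.length ∧ idx p d n ρ y k < y.length ∧
      x[idx p d n ρ x k]? ≠ y[idx p d n ρ y k]?})
    (hpos : μU α p d n E ≠ 0) :
    ProbabilityTheory.cond (μU α p d n) E {ρ | gridChar p d n ρ x y k = GOp.gloop} =
        ENNReal.ofReal (pa p ^ 2) ∧
    ProbabilityTheory.cond (μU α p d n) E {ρ | gridChar p d n ρ x y k = GOp.gdel} =
        ENNReal.ofReal (pa p * (1 - pa p) * prr p) ∧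
    ProbabilityTheory.cond (μU α p d n) E {ρ | gridChar p d n ρ x y k = GOp.gins} =
        ENNReal.ofReal (pa p * (1 - pa p) * prr p) ∧
    ProbabilityTheory.cond (μU α p d n) E {ρ | gridChar p d n ρ x y k = GOp.grep} =
        ENNReal.ofReal ((1 - pa p) ^ 2 * prr p ^ 2) := by
  subst hE
  have hpa1 := pa_le_one hp0.le
  have h1pa : 0 ≤ 1 - pa p := sub_nonneg.mpr hpa1
  have hcond := cond_gridChar_eq_mismatchStep x y (Nat.lt_ceil.mpr hk) hpos
  have hins := unif01_hashStep_ins (prr p) hpa1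
  have hrep := unif01_hashStep_rep (pa_nonneg p) hpa1 (prr_le_one hp0.le hp)
  refine ⟨?_, ?_, ?_, ?_⟩
  · refine (hcond .ins .ins (by decide) (by decide)).trans ?_
    rw [hins, ← ENNReal.ofReal_mul (pa_nonneg p), sq]
  · refine (hcond .rep .ins (by decide) (by decide)).trans ?_
    rw [hins, hrep, ← ENNReal.ofReal_mul (mul_nonneg h1pa (prr_nonneg p))]
    congr 1; ring
  · refine (hcond .ins .rep (by decide) (by decide)).trans ?_
    rw [hins, hrep, ← ENNReal.ofReal_mul (pa_nonneg p)]
    congr 1; ring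
  · refine (hcond .rep .rep (by decide) (by decide)).trans ?_
    rw [hrep, ← ENNReal.ofReal_mul (mul_nonneg h1pa (prr_nonneg p))]
    congr 1; ring

/-- conditional probabilities of the grid walk characters at any fixed
position `k < L`, given the event `E_k` that both scanning indices are in range and the
current characters mismatch. -/
theorem stmt4 {α : Type} [Fintype α] [DecidableEq α]
    (p : ℝ) (hp0 : 0 < p) (hp : p ≤ 1 / 3) (n d : ℕ) (hn : 2 ≤ n) (hd : 1 ≤ d)
    (x y : List (Option α)) (hx : DollarTerminal x) (hy : DollarTerminal y)
    (k : ℕ) (hk : (k : ℝ) < Lreal p d n)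
    (E : Set (Ufun α p d n))
    (hE : E = {ρ | idx p d n ρ x k < x.length ∧ idx p d n ρ y k < y.length ∧
      x[idx p d n ρ x k]? ≠ y[idx p d n ρ y k]?})
    (hpos : μU α p d n E ≠ 0) :
    ProbabilityTheory.cond (μU α p d n) E {ρ | gridChar p d n ρ x y k = GOp.gloop} =
        ENNReal.ofReal (pa p ^ 2) ∧
    ProbabilityTheory.cond (μU α p d n) E {ρ | gridChar p d n ρ x y k = GOp.gdel} =
        ENNReal.ofReal (pa p * (1 - pa p) * prr p) ∧
    ProbabilityTheory.cond (μU α p d n) E {ρ | gridChar p d n ρ x y k = GOp.gins} =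
        ENNReal.ofReal (pa p * (1 - pa p) * prr p) ∧
    ProbabilityTheory.cond (μU α p d n) E {ρ | gridChar p d n ρ x y k = GOp.grep} =
        ENNReal.ofReal ((1 - pa p) ^ 2 * prr p ^ 2) :=
  stmt4_general p hp0 hp n d x y k hk E hE hpos

end EditLSH
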